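/- arXiv:2512.18308 — 4 statements merged into one kernel-verified Lean document; each statement's English description precedes it below -/
import Mathlib

section
/- Let τ ∈ ℂ with Im τ > 0. For z ∈ ℂ one has θ₁(z;τ) = 0 if and only if there exist integers m, n with z = m + n·τ; that is, the zeros of θ₁(·;τ) are exactly the points of the lattice ℤ + ℤτ. -/
open Complex

/-- The Jacobi theta function θ₁(z;τ), defined via Mathlib's `jacobiTheta₂` by
θ₁(z;τ) = −i·exp(iπτ/4 + iπz)·jacobiTheta₂(z + (1+τ)/2, τ). -/
noncomputable def theta1 (z τ : ℂ) : ℂ :=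
  -I * Complex.exp (I * (Real.pi : ℂ) * τ / 4 + I * (Real.pi : ℂ) * z) *
    jacobiTheta₂ (z + (1 + τ) / 2) τ

/-!
θ₁(·;τ) is odd and satisfies θ₁(z + 1) = -θ₁(z), θ₁(z + τ) = -e^{-πiτ - 2πiz} θ₁(z), so it
vanishes on ℤ + ℤτ and its zero set is invariant under that lattice.

For the converse, the zero set moves with the lattice under τ ↦ τ + 1 and, by Jacobi's
functional equation, under τ ↦ -1/τ. Inverting a τ with |Re τ| ≤ 1/2 and Im τ < 2/3
multiplies Im τ by at least 4/3, so it suffices to treat Im τ ≥ 2/3. There, after a lattice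
translation making |Im z| ≤ Im τ / 2, pairing the terms n and -(n + 1) of the theta series
writes θ₁(z) as a nonzero multiple of ∑ aₙ with a₀ = 1 - e^{-2πiz} and
|aₙ| ≤ (3e^{-π Im τ})ⁿ |a₀| ≤ 2⁻ⁿ |a₀|. Such a sum vanishes only if a₀ = 0, that is, z ∈ ℤ.
-/

open Real Function

lemma theta1_neg (z τ : ℂ) : theta1 (-z) τ = -theta1 z τ := by
  set w := z + (1 - τ) / 2
  have h₁ : jacobiTheta₂ (-z + (1 + τ) / 2) τ = jacobiTheta₂ w τ := by
    rw [show -z + (1 + τ) / 2 = -w + 1 by ring, jacobiTheta₂_add_left, jacobiTheta₂_neg_left]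
  have h₂ : jacobiTheta₂ (z + (1 + τ) / 2) τ = -cexp (-(2 * π * I * z)) * jacobiTheta₂ w τ := by
    rw [show z + (1 + τ) / 2 = w + τ by ring, jacobiTheta₂_add_left',
      show -π * I * (τ + 2 * w) = -(2 * π * I * z) - π * I by ring, Complex.exp_sub,
      Complex.exp_pi_mul_I]
    ring
  unfold theta1
  rw [h₁, h₂, show I * π * τ / 4 + I * π * (-z) = (I * π * τ / 4 + I * π * z) + -(2 * π * I * z)
    by ring, Complex.exp_add]
  ring

lemma theta1_zero (τ : ℂ) : theta1 0 τ = 0 := by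
  exact CharZero.eq_neg_self_iff.mp (by simpa using theta1_neg 0 τ)

lemma theta1_add_one (z τ : ℂ) : theta1 (z + 1) τ = -theta1 z τ := by
  unfold theta1
  rw [show z + 1 + (1 + τ) / 2 = (z + (1 + τ) / 2) + 1 by ring, jacobiTheta₂_add_left,
    show I * π * τ / 4 + I * π * (z + 1) = (I * π * τ / 4 + I * π * z) + π * I by ring,
    Complex.exp_add, Complex.exp_pi_mul_I]
  ring

lemma theta1_add_self (z τ : ℂ) :
    theta1 (z + τ) τ = -cexp (-π * I * τ - 2 * π * I * z) * theta1 z τ := by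
  have hexp : cexp (I * π * τ / 4 + I * π * (z + τ)) *
      cexp (-π * I * (τ + 2 * (z + (1 + τ) / 2))) =
      -(cexp (-π * I * τ - 2 * π * I * z) * cexp (I * π * τ / 4 + I * π * z)) := by
    rw [← Complex.exp_add, ← Complex.exp_add,
      show I * π * τ / 4 + I * π * (z + τ) + -π * I * (τ + 2 * (z + (1 + τ) / 2)) =
        (-π * I * τ - 2 * π * I * z + (I * π * τ / 4 + I * π * z)) + -(π * I) by ring,
      Complex.exp_add, Complex.exp_neg, Complex.exp_pi_mul_I, inv_neg, inv_one, mul_neg_one]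
  unfold theta1
  rw [show z + τ + (1 + τ) / 2 = (z + (1 + τ) / 2) + τ by ring, jacobiTheta₂_add_left']
  linear_combination (-I * jacobiTheta₂ (z + (1 + τ) / 2) τ) * hexp

lemma periodic_theta1_eq_zero_one (τ : ℂ) : Periodic (fun z ↦ theta1 z τ = 0) 1 := fun z ↦ by
  simp [theta1_add_one]

lemma periodic_theta1_eq_zero_self (τ : ℂ) : Periodic (fun z ↦ theta1 z τ = 0) τ := fun z ↦ by
  simp [theta1_add_self, Complex.exp_ne_zero]

lemma theta1_add_lattice_eq_zero_iff (z τ : ℂ) (m n : ℤ) :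
    theta1 (z + (m + n * τ)) τ = 0 ↔ theta1 z τ = 0 := by
  have := ((periodic_theta1_eq_zero_one τ).int_mul m).add_period
    ((periodic_theta1_eq_zero_self τ).int_mul n)
  rw [mul_one] at this
  exact Iff.of_eq (this z)

lemma theta1_lattice_eq_zero (τ : ℂ) (m n : ℤ) : theta1 (m + n * τ) τ = 0 := by
  simpa using (theta1_add_lattice_eq_zero_iff 0 τ m n).mpr (theta1_zero τ)

lemma jacobiTheta₂_add_int_right (z τ : ℂ) (k : ℤ) :
    jacobiTheta₂ z (τ + k) = jacobiTheta₂ (z + k / 2) τ := by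
  refine tsum_congr fun n ↦ ?_
  obtain ⟨m, hm⟩ := Int.even_mul_pred_self n
  have hm' : (n : ℂ) ^ 2 - n = 2 * m := by
    exact_mod_cast (by linear_combination hm : n ^ 2 - n = 2 * m)
  rw [jacobiTheta₂_term, jacobiTheta₂_term,
    show 2 * π * I * n * z + π * I * n ^ 2 * (τ + k) =
      2 * π * I * n * (z + k / 2) + π * I * n ^ 2 * τ + (k * m : ℤ) * (2 * π * I) by
      push_cast; linear_combination π * I * k * hm',
    Complex.exp_add, Complex.exp_int_mul_two_pi_mul_I, mul_one]

lemma theta1_add_int_right (z τ : ℂ) (k : ℤ) :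
    theta1 z (τ + k) = cexp (π * I * k / 4) * theta1 z τ := by
  have hper : jacobiTheta₂ (z + (1 + τ) / 2 + k * 1) τ = jacobiTheta₂ (z + (1 + τ) / 2) τ :=
    Periodic.int_mul (f := (jacobiTheta₂ · τ)) (fun w ↦ jacobiTheta₂_add_left w τ) k _
  unfold theta1
  rw [jacobiTheta₂_add_int_right,
    show z + (1 + (τ + k)) / 2 + k / 2 = z + (1 + τ) / 2 + k * 1 by ring, hper,
    show I * π * (τ + k) / 4 + I * π * z = π * I * k / 4 + (I * π * τ / 4 + I * π * z) by ring,
    Complex.exp_add]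
  ring

lemma theta1_add_int_right_eq_zero_iff (z τ : ℂ) (k : ℤ) :
    theta1 z (τ + k) = 0 ↔ theta1 z τ = 0 := by
  simp [theta1_add_int_right, Complex.exp_ne_zero]

lemma theta1_eq_zero_iff_jacobiTheta₂ (z τ : ℂ) :
    theta1 z τ = 0 ↔ jacobiTheta₂ (z + (1 + τ) / 2) τ = 0 := by
  simp [theta1, Complex.exp_ne_zero, I_ne_zero]

lemma theta1_eq_zero_iff_neg_inv {τ : ℂ} (hτ : 0 < τ.im) (z : ℂ) :
    theta1 z τ = 0 ↔ theta1 (z / τ) (-1 / τ) = 0 := by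
  have hτ₀ : τ ≠ 0 := fun h ↦ by simp [h] at hτ
  have hfactor : 1 / (-I * τ) ^ (1 / 2 : ℂ) * cexp (-π * I * (z + (1 + τ) / 2) ^ 2 / τ) ≠ 0 :=
    mul_ne_zero (one_div_ne_zero <| by simp [Complex.cpow_eq_zero_iff, I_ne_zero, hτ₀])
      (Complex.exp_ne_zero _)
  rw [theta1_eq_zero_iff_jacobiTheta₂, theta1_eq_zero_iff_jacobiTheta₂,
    jacobiTheta₂_functional_equation, mul_eq_zero, or_iff_right hfactor,
    show z / τ + (1 + -1 / τ) / 2 = (z + (1 + τ) / 2) / τ + -1 / τ by field_simp; ring,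
    jacobiTheta₂_add_left', mul_eq_zero, or_iff_right (Complex.exp_ne_zero _)]

lemma tsum_ne_zero_of_norm_le_geometric {E : Type*} [NormedAddCommGroup E] [CompleteSpace E]
    {f : ℕ → E} {ρ : ℝ} (hρ₀ : 0 ≤ ρ) (hρ : ρ < 1 / 2) (hf : ∀ n, ‖f n‖ ≤ ρ ^ n * ‖f 0‖)
    (h₀ : f 0 ≠ 0) : ∑' n, f n ≠ 0 := by
  have hρ₁ : ρ < 1 := by linarith
  have hsum : Summable f :=
    Summable.of_norm_bounded ((summable_geometric_of_lt_one hρ₀ hρ₁).mul_right _) hf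
  have htail : ‖∑' n, f (n + 1)‖ ≤ ρ * (1 - ρ)⁻¹ * ‖f 0‖ := by
    refine tsum_of_norm_bounded ?_ fun n ↦ hf (n + 1)
    simpa only [pow_succ', mul_assoc] using
      ((hasSum_geometric_of_lt_one hρ₀ hρ₁).mul_right ‖f 0‖).mul_left ρ
  have hratio : ρ * (1 - ρ)⁻¹ < 1 := by
    rw [← div_eq_mul_inv, div_lt_one (by linarith)]
    linarith
  rw [hsum.tsum_eq_zero_add]
  intro h
  rw [← eq_neg_iff_add_eq_zero] at h
  have h₀' : 0 < ‖f 0‖ := norm_pos_iff.mpr h₀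
  rw [← norm_neg, ← h] at htail
  nlinarith

lemma exp_nat_mul_sub_exp_neg_succ_mul (a : ℂ) (n : ℕ) :
    cexp (n * a) - cexp (-(n + 1) * a) =
      (1 - cexp (-a)) * ∑ j ∈ Finset.range (2 * n + 1), cexp ((n - j) * a) := by
  have hstep : ∀ j : ℕ, (1 - cexp (-a)) * cexp ((n - j) * a) =
      cexp ((n - j) * a) - cexp ((n - (j + 1 : ℕ)) * a) := fun j ↦ by
    rw [sub_mul, one_mul, ← Complex.exp_add]
    push_cast
    ring_nf
  rw [Finset.mul_sum, Finset.sum_congr rfl fun j _ ↦ hstep j, Finset.sum_range_sub']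
  push_cast
  ring_nf

lemma norm_exp_nat_mul_sub_exp_neg_succ_mul_le {a : ℂ} {s : ℝ} (ha : |a.re| ≤ s) (n : ℕ) :
    ‖cexp (n * a) - cexp (-(n + 1) * a)‖ ≤ (2 * n + 1) * rexp (n * s) * ‖1 - cexp (-a)‖ := by
  have hterm : ∀ j ∈ Finset.range (2 * n + 1), ‖cexp ((n - j) * a)‖ ≤ rexp (n * s) := by
    intro j hj
    have hj : (j : ℝ) ≤ 2 * n := by exact_mod_cast Nat.lt_succ_iff.mp (Finset.mem_range.mp hj)
    rw [Complex.norm_exp, Real.exp_le_exp]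
    have hre : ((n - j) * a).re = (n - j) * a.re := by simp
    rw [hre]
    have hnj : |(n : ℝ) - j| ≤ n := abs_le.mpr ⟨by linarith, by linarith [j.cast_nonneg (α := ℝ)]⟩
    calc (n - j) * a.re ≤ |(n - j) * a.re| := le_abs_self _
      _ = |(n : ℝ) - j| * |a.re| := abs_mul _ _
      _ ≤ n * s := mul_le_mul hnj ha (abs_nonneg _) n.cast_nonneg
  rw [exp_nat_mul_sub_exp_neg_succ_mul, norm_mul, mul_comm]
  gcongr
  calc ‖∑ j ∈ Finset.range (2 * n + 1), cexp ((n - j) * a)‖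
      ≤ ∑ j ∈ Finset.range (2 * n + 1), ‖cexp ((n - j) * a)‖ := norm_sum_le _ _
    _ ≤ (2 * n + 1 : ℕ) • rexp (n * s) := by
      simpa using Finset.sum_le_card_nsmul _ _ _ hterm
    _ = (2 * n + 1) * rexp (n * s) := by simp

noncomputable def theta1PairTerm (z τ : ℂ) (n : ℕ) : ℂ :=
  cexp (n * (π * I) + n * (n + 1) * (π * I * τ)) *
    (cexp (n * (2 * π * I * z)) - cexp (-(n + 1) * (2 * π * I * z)))

lemma jacobiTheta₂_term_add_jacobiTheta₂_term_neg_succ (z τ : ℂ) (n : ℕ) :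
    jacobiTheta₂_term n (z + (1 + τ) / 2) τ + jacobiTheta₂_term (-(n + 1)) (z + (1 + τ) / 2) τ =
      theta1PairTerm z τ n := by
  set A : ℂ := n * (π * I) + n * (n + 1) * (π * I * τ)
  have h₁ : jacobiTheta₂_term n (z + (1 + τ) / 2) τ = cexp A * cexp (n * (2 * π * I * z)) := by
    rw [jacobiTheta₂_term, ← Complex.exp_add]
    congr 1
    push_cast
    ring
  have h₂ : jacobiTheta₂_term (-(n + 1)) (z + (1 + τ) / 2) τ =
      -(cexp A * cexp (-(n + 1) * (2 * π * I * z))) := by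
    rw [jacobiTheta₂_term, show 2 * π * I * ((-(n + 1) : ℤ) : ℂ) * (z + (1 + τ) / 2) +
        π * I * ((-(n + 1) : ℤ) : ℂ) ^ 2 * τ =
        A + -(n + 1) * (2 * π * I * z) + -(π * I) + ((-n : ℤ) : ℂ) * (2 * π * I) by
          push_cast; ring,
      Complex.exp_add, Complex.exp_add, Complex.exp_add, Complex.exp_neg, Complex.exp_pi_mul_I,
      Complex.exp_int_mul_two_pi_mul_I]
    ring
  rw [h₁, h₂, theta1PairTerm]
  ring

lemma hasSum_theta1PairTerm {τ : ℂ} (hτ : 0 < τ.im) (z : ℂ) :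
    HasSum (theta1PairTerm z τ) (jacobiTheta₂ (z + (1 + τ) / 2) τ) := by
  have := (hasSum_jacobiTheta₂_term (z + (1 + τ) / 2) hτ).nat_add_neg_add_one
  simp only [jacobiTheta₂_term_add_jacobiTheta₂_term_neg_succ] at this
  exact this

lemma theta1PairTerm_zero (z τ : ℂ) : theta1PairTerm z τ 0 = 1 - cexp (-(2 * π * I * z)) := by
  simp [theta1PairTerm]

lemma norm_theta1PairTerm_le {z τ : ℂ} (hz : |z.im| ≤ τ.im / 2) (n : ℕ) :
    ‖theta1PairTerm z τ n‖ ≤ (3 * rexp (-π * τ.im)) ^ n * ‖theta1PairTerm z τ 0‖ := by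
  have ht : 0 ≤ τ.im := by linarith [abs_nonneg z.im]
  have hre : |(2 * π * I * z).re| ≤ π * τ.im := by
    have : (2 * π * I * z).re = 2 * π * -z.im := by simp
    rw [this, abs_mul, abs_neg, abs_of_pos (by positivity)]
    nlinarith [pi_pos]
  have hq : ‖cexp (n * (π * I) + n * (n + 1) * (π * I * τ))‖ =
      rexp (-(n * (n + 1)) * (π * τ.im)) := by
    rw [Complex.norm_exp]
    congr 1
    simp only [add_re, mul_re, mul_im, natCast_re, natCast_im, ofReal_re, ofReal_im, I_re, I_im,
      add_im, one_re, one_im]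
    ring
  have hpow : (2 * n + 1 : ℝ) * rexp (-(n * (n + 1)) * (π * τ.im)) * rexp (n * (π * τ.im)) ≤
      (3 * rexp (-π * τ.im)) ^ n := by
    rw [mul_assoc, ← Real.exp_add, mul_pow, ← Real.exp_nat_mul]
    have h3 : (2 * n + 1 : ℝ) ≤ 3 ^ n := by
      have := one_add_mul_le_pow (show (-2 : ℝ) ≤ 2 by norm_num) n
      norm_num at this
      linarith
    have hn : (n : ℝ) ≤ n * n := by exact_mod_cast Nat.le_mul_self n
    gcongr
    nlinarith [mul_nonneg (sub_nonneg.2 hn) (mul_nonneg pi_pos.le ht)]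
  rw [theta1PairTerm, norm_mul, hq, theta1PairTerm_zero]
  calc _ ≤ rexp (-(n * (n + 1)) * (π * τ.im)) *
        ((2 * n + 1) * rexp (n * (π * τ.im)) * ‖1 - cexp (-(2 * π * I * z))‖) :=
        by gcongr; exact norm_exp_nat_mul_sub_exp_neg_succ_mul_le hre n
    _ ≤ _ := by
      rw [← mul_assoc, ← mul_assoc, mul_comm (rexp _)]
      gcongr

lemma three_mul_exp_neg_pi_mul_lt {t : ℝ} (ht : 2 / 3 ≤ t) : 3 * rexp (-π * t) < 1 / 2 := by
  have hπt : -π * t ≤ -2 := by nlinarith [pi_gt_three]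
  have he : 6 < rexp 2 := by
    rw [show (2 : ℝ) = 1 + 1 by norm_num, Real.exp_add]
    nlinarith [exp_one_gt_d9]
  have : rexp (-π * t) ≤ (rexp 2)⁻¹ := by rw [← Real.exp_neg]; exact Real.exp_le_exp.mpr hπt
  have : (rexp 2)⁻¹ < 1 / 6 := by rw [inv_lt_comm₀ (by positivity) (by norm_num)]; simpa using he
  linarith

lemma exists_int_eq_of_theta1_eq_zero {z τ : ℂ} (hτ : 2 / 3 ≤ τ.im) (hz : |z.im| ≤ τ.im / 2)
    (h : theta1 z τ = 0) : ∃ m : ℤ, z = m := by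
  by_contra hm
  have h₀ : theta1PairTerm z τ 0 ≠ 0 := by
    rw [theta1PairTerm_zero, sub_ne_zero, ne_comm, Ne, Complex.exp_eq_one_iff]
    rintro ⟨m, hm'⟩
    refine hm ⟨-m, ?_⟩
    have h2πI : 2 * π * I ≠ 0 := by simp [pi_ne_zero, I_ne_zero]
    have hz : -z = m := mul_right_cancel₀ h2πI (by linear_combination hm')
    push_cast
    linear_combination -hz
  refine tsum_ne_zero_of_norm_le_geometric (by positivity) (three_mul_exp_neg_pi_mul_lt hτ)
    (norm_theta1PairTerm_le hz) h₀ ?_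
  rwa [(hasSum_theta1PairTerm (by linarith) z).tsum_eq, ← theta1_eq_zero_iff_jacobiTheta₂]

lemma exists_int_abs_im_sub_mul_le {τ : ℂ} (hτ : 0 < τ.im) (z : ℂ) :
    ∃ n : ℤ, |(z - n * τ).im| ≤ τ.im / 2 := by
  refine ⟨round (z.im / τ.im), ?_⟩
  have : (z - round (z.im / τ.im) * τ).im = (z.im / τ.im - round (z.im / τ.im)) * τ.im := by
    simp only [sub_im, mul_im, intCast_re, intCast_im, zero_mul, add_zero]
    field_simp
  rw [this, abs_mul, abs_of_pos hτ]
  nlinarith [abs_sub_round (z.im / τ.im)]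

def Theta1ZerosInLattice (τ : ℂ) : Prop :=
  ∀ z, theta1 z τ = 0 → ∃ m n : ℤ, z = m + n * τ

lemma theta1ZerosInLattice_of_two_thirds_le_im {τ : ℂ} (hτ : 2 / 3 ≤ τ.im) :
    Theta1ZerosInLattice τ := by
  intro z hz
  obtain ⟨n, hn⟩ := exists_int_abs_im_sub_mul_le (by linarith) z
  have hz' : theta1 (z - n * τ) τ = 0 :=
    (theta1_add_lattice_eq_zero_iff (z - n * τ) τ 0 n).mp (by simpa using hz)
  obtain ⟨m, hm⟩ := exists_int_eq_of_theta1_eq_zero hτ hn hz'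
  exact ⟨m, n, by linear_combination hm⟩

lemma Theta1ZerosInLattice.add_int {τ : ℂ} (h : Theta1ZerosInLattice τ) (k : ℤ) :
    Theta1ZerosInLattice (τ + k) := by
  intro z hz
  obtain ⟨m, n, rfl⟩ := h z ((theta1_add_int_right_eq_zero_iff z τ k).mp hz)
  exact ⟨m - n * k, n, by push_cast; ring⟩

lemma Theta1ZerosInLattice.of_neg_inv {τ : ℂ} (hτ : 0 < τ.im)
    (h : Theta1ZerosInLattice (-1 / τ)) : Theta1ZerosInLattice τ := by
  have hτ₀ : τ ≠ 0 := fun h ↦ by simp [h] at hτ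
  intro z hz
  obtain ⟨m, n, hmn⟩ := h _ ((theta1_eq_zero_iff_neg_inv hτ z).mp hz)
  refine ⟨-n, m, ?_⟩
  field_simp at hmn
  push_cast
  linear_combination hmn

lemma exists_int_im_le_im_neg_inv {τ : ℂ} (hτ : 0 < τ.im) (hτ' : τ.im < 2 / 3) :
    ∃ k : ℤ, 4 / 3 * τ.im ≤ (-1 / (τ + k)).im := by
  refine ⟨-round τ.re, ?_⟩
  set τ₁ := τ + ((-round τ.re : ℤ) : ℂ)
  have him : τ₁.im = τ.im := by simp [τ₁]
  have hre : |τ₁.re| ≤ 1 / 2 := by simpa [τ₁, ← sub_eq_add_neg] using abs_sub_round τ.re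
  have hnormSq : normSq τ₁ ≤ 3 / 4 := by
    rw [normSq_apply, him]
    nlinarith [abs_mul_abs_self τ₁.re, abs_nonneg τ₁.re]
  have hpos : 0 < normSq τ₁ := normSq_pos.mpr fun h ↦ by simp [h] at him; linarith
  rw [neg_div, one_div, neg_im, inv_im, neg_div, neg_neg, him, le_div_iff₀ hpos]
  nlinarith

lemma theta1ZerosInLattice_of_two_thirds_le_pow_mul_im (N : ℕ) {τ : ℂ} (hτ : 0 < τ.im)
    (hN : 2 / 3 ≤ (4 / 3) ^ N * τ.im) : Theta1ZerosInLattice τ := by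
  induction N generalizing τ with
  | zero => exact theta1ZerosInLattice_of_two_thirds_le_im (by simpa using hN)
  | succ N ih =>
    by_cases hτ' : 2 / 3 ≤ τ.im
    · exact theta1ZerosInLattice_of_two_thirds_le_im hτ'
    obtain ⟨k, hk⟩ := exists_int_im_le_im_neg_inv hτ (not_le.mp hτ')
    have hτk : 0 < (τ + k).im := by simpa using hτ
    have hS : Theta1ZerosInLattice (-1 / (τ + k)) := ih (by linarith) <|
      calc 2 / 3 ≤ (4 / 3) ^ N * (4 / 3 * τ.im) := by rw [← mul_assoc, ← pow_succ]; exact hN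
        _ ≤ _ := by gcongr
    simpa using (hS.of_neg_inv hτk).add_int (-k)

/-- The zeros of θ₁(·;τ) are exactly the lattice points ℤ + ℤτ. -/
theorem theta1_zero_iff (τ : ℂ) (hτ : 0 < τ.im) (z : ℂ) :
    theta1 z τ = 0 ↔ ∃ m n : ℤ, z = (m : ℂ) + (n : ℂ) * τ := by
  refine ⟨fun hz ↦ ?_, fun ⟨m, n, hmn⟩ ↦ hmn ▸ theta1_lattice_eq_zero τ m n⟩
  obtain ⟨N, hN⟩ := pow_unbounded_of_one_lt (2 / 3 / τ.im) (by norm_num : (1 : ℝ) < 4 / 3)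
  exact theta1ZerosInLattice_of_two_thirds_le_pow_mul_im N hτ ((div_lt_iff₀ hτ).mp hN).le z hz
end

section
/- Let τ ∈ ℂ with Im τ > 0 and let m, n be integers. Then the complex derivative of the function z ↦ θ₁(z;τ) at the lattice point z = m + n·τ is nonzero; in particular every zero of θ₁(·;τ) is simple. -/
open Complex

/-!
At a lattice point `p`, `θ₁(·;τ)` is a nonvanishing factor times `θ₂(· + (1 + τ)/2, τ)`, so it
suffices that `(1 + τ)/2` is a simple zero of `θ₂(·, τ)`; by quasi-periodicity the same then holds
at every point of `(1 + τ)/2 + ℤ + ℤτ`. That `(1 + τ)/2` is a zero follows from evenness and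
quasi-periodicity. Whether it is simple is invariant under `τ ↦ τ + 1` and `τ ↦ -1/τ` (Jacobi's
transformation formula). For `Im τ ≥ 1/2` it is simple because
`θ₂'((1 + τ)/2, τ) = 2πi (1 - 3q² + 5q⁶ - ⋯)` with `q = e^{πiτ}` is dominated by its leading
term. Every `τ` is brought into that region: while `Im τ < 1/2`, the map
`τ ↦ -1/(τ - round (Re τ))` at least doubles `Im τ`.
-/

open Real Function

lemma HasSum.ne_zero_of_norm_le_geometric {E : Type*} [NormedAddCommGroup E] {f : ℕ → E} {s : E}
    {x : ℝ} (hf : HasSum f s) (h0 : f 0 ≠ 0) (hx0 : 0 ≤ x) (hx : x < 1 / 2)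
    (hbound : ∀ n, ‖f (n + 1)‖ ≤ ‖f 0‖ * x ^ (n + 1)) : s ≠ 0 := by
  have htail : HasSum (fun n ↦ f (n + 1)) (s - f 0) := by
    simpa using (hasSum_nat_add_iff' 1).mpr hf
  have hgeo : HasSum (fun n ↦ ‖f 0‖ * x ^ (n + 1)) (‖f 0‖ * x * (1 - x)⁻¹) := by
    simpa [pow_succ, mul_assoc, mul_comm x] using
      (hasSum_geometric_of_lt_one hx0 (by linarith)).mul_left (‖f 0‖ * x)
  have hle := tsum_of_norm_bounded hgeo hbound
  rw [htail.tsum_eq] at hle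
  rintro rfl
  rw [zero_sub, norm_neg] at hle
  have hx1 : x * (1 - x)⁻¹ < 1 := by
    rw [← div_eq_mul_inv, div_lt_one (by linarith)]
    linarith
  have hpos : 0 < ‖f 0‖ := norm_pos_iff.mpr h0
  nlinarith

def IsSimpleThetaZero (z τ : ℂ) : Prop :=
  jacobiTheta₂ z τ = 0 ∧ jacobiTheta₂' z τ ≠ 0

lemma isSimpleThetaZero_periodic_one (τ : ℂ) : Periodic (IsSimpleThetaZero · τ) 1 := fun z ↦ by
  simp only [IsSimpleThetaZero, jacobiTheta₂_add_left, jacobiTheta₂'_add_left]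

lemma isSimpleThetaZero_periodic_self (τ : ℂ) : Periodic (IsSimpleThetaZero · τ) τ := fun z ↦ by
  simp only [IsSimpleThetaZero, jacobiTheta₂_add_left', jacobiTheta₂'_add_left', mul_eq_zero,
    Complex.exp_ne_zero, false_or]
  exact propext (and_congr_right fun h0 ↦ by simp [h0, Complex.exp_ne_zero])

lemma isSimpleThetaZero_add_lattice (z τ : ℂ) (m n : ℤ) :
    IsSimpleThetaZero (z + m + n * τ) τ ↔ IsSimpleThetaZero z τ := by
  have h1 := (isSimpleThetaZero_periodic_one τ).int_mul m z
  have h2 := (isSimpleThetaZero_periodic_self τ).int_mul n (z + m)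
  simp only [mul_one] at h1 h2
  rw [h2, h1]

lemma jacobiTheta₂_term_add_one_right (n : ℤ) (z τ : ℂ) :
    jacobiTheta₂_term n z (τ + 1) = jacobiTheta₂_term n (z + 1 / 2) τ := by
  obtain ⟨k, hk⟩ := Int.even_mul_pred_self n
  rw [jacobiTheta₂_term, jacobiTheta₂_term, Complex.exp_eq_exp_iff_exists_int]
  refine ⟨k, ?_⟩
  have hk' : (n : ℂ) * (n - 1) = k + k := by exact_mod_cast hk
  linear_combination (π * I) * hk'

lemma isSimpleThetaZero_add_one_right (z τ : ℂ) :
    IsSimpleThetaZero z (τ + 1) ↔ IsSimpleThetaZero (z + 1 / 2) τ := by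
  simp only [IsSimpleThetaZero, jacobiTheta₂, jacobiTheta₂', jacobiTheta₂'_term,
    jacobiTheta₂_term_add_one_right]

lemma isSimpleThetaZero_half_period_periodic :
    Periodic (fun τ ↦ IsSimpleThetaZero ((1 + τ) / 2) τ) 1 := fun τ ↦ by
  simp only [isSimpleThetaZero_add_one_right]
  rw [show (1 + (τ + 1)) / 2 + 1 / 2 = (1 + τ) / 2 + 1 by ring]
  exact isSimpleThetaZero_periodic_one τ _

lemma isSimpleThetaZero_of_div {z τ : ℂ} (hτ : τ ≠ 0)
    (h : IsSimpleThetaZero (z / τ) (-1 / τ)) : IsSimpleThetaZero z τ := by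
  have hc : 1 / (-I * τ) ^ (1 / 2 : ℂ) * cexp (-π * I * z ^ 2 / τ) ≠ 0 := by
    refine mul_ne_zero (one_div_ne_zero ?_) (Complex.exp_ne_zero _)
    rw [Ne, Complex.cpow_eq_zero_iff]
    exact fun h ↦ mul_ne_zero (neg_ne_zero.mpr I_ne_zero) hτ h.1
  rw [IsSimpleThetaZero, jacobiTheta₂_functional_equation, jacobiTheta₂'_functional_equation,
    h.1, mul_zero, mul_zero, sub_zero]
  exact ⟨rfl, mul_ne_zero (div_ne_zero hc hτ) h.2⟩

lemma jacobiTheta₂_half_period (τ : ℂ) : jacobiTheta₂ ((1 + τ) / 2) τ = 0 := by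
  have h := jacobiTheta₂_add_left' (-((1 + τ) / 2) + 1) τ
  rw [jacobiTheta₂_add_left, jacobiTheta₂_neg_left,
    show -((1 + τ) / 2) + 1 + τ = (1 + τ) / 2 by ring,
    show -π * I * (τ + 2 * (-((1 + τ) / 2) + 1)) = -(π * I) by ring,
    Complex.exp_neg, Complex.exp_pi_mul_I] at h
  linear_combination h / 2

lemma norm_jacobiTheta₂'_term_half_period (k : ℤ) (τ : ℂ) :
    ‖jacobiTheta₂'_term k ((1 + τ) / 2) τ‖ =
      2 * π * |(k : ℝ)| * rexp (-π * τ.im * (k ^ 2 + k)) := by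
  rw [jacobiTheta₂'_term, norm_mul, norm_jacobiTheta₂_term]
  congr 1
  · simp [abs_of_pos pi_pos]
  · congr 1
    simp only [div_ofNat_im, add_im, one_im]
    ring

lemma jacobiTheta₂'_term_half_period_pair_zero (τ : ℂ) :
    jacobiTheta₂'_term 0 ((1 + τ) / 2) τ + jacobiTheta₂'_term (-1) ((1 + τ) / 2) τ =
      2 * π * I := by
  have h : 2 * π * I * ((-1 : ℤ) : ℂ) * ((1 + τ) / 2) + π * I * ((-1 : ℤ) : ℂ) ^ 2 * τ
      = -(π * I) := by push_cast; ring
  simp only [jacobiTheta₂'_term, jacobiTheta₂_term, h, Complex.exp_neg, Complex.exp_pi_mul_I]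
  push_cast
  ring

lemma norm_jacobiTheta₂'_term_half_period_pair_le {τ : ℂ} (hτ : 0 ≤ τ.im) (n : ℕ) :
    ‖jacobiTheta₂'_term ((n + 1 : ℕ) : ℤ) ((1 + τ) / 2) τ +
        jacobiTheta₂'_term (-(((n + 1 : ℕ) : ℤ) + 1)) ((1 + τ) / 2) τ‖
      ≤ 2 * π * (3 * rexp (-2 * π * τ.im)) ^ (n + 1) := by
  have hexp : rexp (-π * τ.im * ((n + 1) * (n + 2))) ≤ rexp (-2 * π * τ.im) ^ (n + 1) := by
    rw [← Real.exp_nat_mul, Real.exp_le_exp]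
    push_cast
    have hπτ : 0 ≤ π * τ.im := mul_nonneg pi_pos.le hτ
    nlinarith [mul_nonneg hπτ (n.cast_nonneg (α := ℝ))]
  have hthree : (2 * n + 3 : ℝ) ≤ 3 ^ (n + 1) := by
    have := one_add_mul_le_pow (by norm_num : (-2 : ℝ) ≤ 2) (n + 1)
    norm_num at this
    linarith
  calc _ ≤ ‖jacobiTheta₂'_term ((n + 1 : ℕ) : ℤ) ((1 + τ) / 2) τ‖ +
        ‖jacobiTheta₂'_term (-(((n + 1 : ℕ) : ℤ) + 1)) ((1 + τ) / 2) τ‖ := norm_add_le _ _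
    _ = 2 * π * (2 * n + 3) * rexp (-π * τ.im * ((n + 1) * (n + 2))) := by
      rw [norm_jacobiTheta₂'_term_half_period, norm_jacobiTheta₂'_term_half_period]
      push_cast
      rw [abs_of_nonneg (by positivity), abs_of_nonpos (by linarith)]
      ring_nf
    _ ≤ 2 * π * 3 ^ (n + 1) * rexp (-2 * π * τ.im) ^ (n + 1) := by gcongr
    _ = 2 * π * (3 * rexp (-2 * π * τ.im)) ^ (n + 1) := by ring

lemma three_mul_exp_neg_two_pi_mul_lt {t : ℝ} (ht : 1 / 2 ≤ t) :
    3 * rexp (-2 * π * t) < 1 / 2 := by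
  have hπ : 6 < rexp π := by
    nlinarith [quadratic_le_exp_of_nonneg pi_pos.le, pi_gt_three]
  have : rexp (-2 * π * t) ≤ rexp (-π) := Real.exp_le_exp.mpr (by nlinarith [pi_pos])
  rw [Real.exp_neg] at this
  have : (rexp π)⁻¹ < 6⁻¹ := inv_strictAnti₀ (by norm_num) hπ
  linarith

lemma isSimpleThetaZero_half_period_of_half_le_im {τ : ℂ} (hτ : 1 / 2 ≤ τ.im) :
    IsSimpleThetaZero ((1 + τ) / 2) τ := by
  have hpair := (hasSum_jacobiTheta₂'_term ((1 + τ) / 2) (by linarith)).nat_add_neg_add_one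
  have h0 : jacobiTheta₂'_term ((0 : ℕ) : ℤ) ((1 + τ) / 2) τ +
      jacobiTheta₂'_term (-(((0 : ℕ) : ℤ) + 1)) ((1 + τ) / 2) τ = 2 * π * I := by
    simpa using jacobiTheta₂'_term_half_period_pair_zero τ
  refine ⟨jacobiTheta₂_half_period τ, hpair.ne_zero_of_norm_le_geometric ?_ (by positivity)
    (three_mul_exp_neg_two_pi_mul_lt hτ) fun n ↦ ?_⟩
  · rw [h0]
    exact mul_ne_zero (mul_ne_zero two_ne_zero (ofReal_ne_zero.mpr pi_ne_zero)) I_ne_zero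
  · rw [h0, norm_mul, norm_mul, norm_I, Complex.norm_ofNat, Complex.norm_real,
      Real.norm_of_nonneg pi_pos.le, mul_one]
    exact norm_jacobiTheta₂'_term_half_period_pair_le (by linarith) n

lemma two_mul_im_le_im_neg_one_div {σ : ℂ} (hre : |σ.re| ≤ 1 / 2) (him : σ.im ≤ 1 / 2)
    (him0 : 0 < σ.im) : 2 * σ.im ≤ (-1 / σ).im := by
  have hσ : 0 < normSq σ := normSq_pos.mpr fun h ↦ by simp [h] at him0
  rw [neg_div, neg_im, one_div, inv_im, neg_div, neg_neg, le_div_iff₀ hσ, normSq_apply]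
  have hre2 : σ.re * σ.re ≤ 1 / 4 := by nlinarith [abs_mul_abs_self σ.re, abs_nonneg σ.re]
  nlinarith

lemma isSimpleThetaZero_half_period {τ : ℂ} (hτ : 0 < τ.im) :
    IsSimpleThetaZero ((1 + τ) / 2) τ := by
  obtain ⟨k, hk⟩ := pow_unbounded_of_one_lt (1 / (2 * τ.im)) (by norm_num : (1 : ℝ) < 2)
  rw [div_lt_iff₀ (by positivity)] at hk
  induction k generalizing τ with
  | zero => exact isSimpleThetaZero_half_period_of_half_le_im (by linarith)
  | succ k ih =>
    rcases le_or_gt (1 / 2) τ.im with hbig | hsmall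
    · exact isSimpleThetaZero_half_period_of_half_le_im hbig
    obtain ⟨σ, m, rfl, hσre⟩ : ∃ σ : ℂ, ∃ m : ℤ, τ = σ + m ∧ |σ.re| ≤ 1 / 2 :=
      ⟨τ - round τ.re, round τ.re, by ring, by simpa using abs_sub_round τ.re⟩
    have hσim : (σ + m).im = σ.im := by simp
    rw [hσim] at hτ hk hsmall
    have hσ0 : σ ≠ 0 := fun h ↦ by simp [h] at hτ
    have hm := isSimpleThetaZero_half_period_periodic.int_mul m σ
    simp only [mul_one] at hm
    rw [hm]
    refine isSimpleThetaZero_of_div hσ0 ?_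
    have hS := two_mul_im_le_im_neg_one_div hσre hsmall.le hτ
    -- `((1 + σ) / 2) / σ` is the half period of `-1 / σ` minus the period `-1 / σ`.
    have hshift := (isSimpleThetaZero_add_lattice ((1 + -1 / σ) / 2) (-1 / σ) 0 (-1)).mpr
      (ih (by linarith) (by rw [pow_succ] at hk; nlinarith [pow_pos (two_pos (α := ℝ)) k]))
    convert hshift using 2
    field_simp
    push_cast
    ring

lemma deriv_theta1_of_jacobiTheta₂_eq_zero {z τ : ℂ} (hτ : 0 < τ.im)
    (h : jacobiTheta₂ (z + (1 + τ) / 2) τ = 0) :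
    deriv (theta1 · τ) z =
      -I * cexp (I * π * τ / 4 + I * π * z) * jacobiTheta₂' (z + (1 + τ) / 2) τ := by
  have hθ : HasDerivAt (fun w ↦ jacobiTheta₂ (w + (1 + τ) / 2) τ)
      (jacobiTheta₂' (z + (1 + τ) / 2) τ) z :=
    (hasDerivAt_jacobiTheta₂_fst _ hτ).comp_add_const z _
  have hg : DifferentiableAt ℂ (fun w ↦ -I * cexp (I * π * τ / 4 + I * π * w)) z := by fun_prop
  have := hg.hasDerivAt.mul hθ
  rw [h, mul_zero, zero_add] at this
  exact this.deriv

/-- The derivative of z ↦ θ₁(z;τ) at any lattice point m + n·τ is nonzero;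
in particular every zero of θ₁(·;τ) is simple. -/
theorem theta1_deriv_ne_zero_at_lattice (τ : ℂ) (hτ : 0 < τ.im) (m n : ℤ) :
    deriv (fun z : ℂ => theta1 z τ) ((m : ℂ) + (n : ℂ) * τ) ≠ 0 := by
  have h := (isSimpleThetaZero_add_lattice _ τ m n).mpr (isSimpleThetaZero_half_period hτ)
  rw [show (1 + τ) / 2 + m + n * τ = m + n * τ + (1 + τ) / 2 by ring] at h
  rw [deriv_theta1_of_jacobiTheta₂_eq_zero hτ h.1]
  exact mul_ne_zero (mul_ne_zero (neg_ne_zero.mpr I_ne_zero) (Complex.exp_ne_zero _)) h.2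
end

section
/- Equivalence of the two expressions for the squared Gauss map of the gyrating H'-T surface: let τ ∈ ℂ with Im τ > 0. Then for all z ∈ ℂ: θ₁(z;τ) · θ₁(z − 1/3; τ) · θ₁(z + 1/3; τ) · θ₁(3z − τ; 3τ) = −exp(iπτ/3) · exp(2πi z) · θ₁(z + 2τ/3; τ) · θ₁(z − τ/3 − 1/3; τ) · θ₁(z − τ/3 + 1/3; τ) · θ₁(3z; 3τ). (Cross-multiplied form of the identity G²(z) = ρ θ₁(z)θ₁(z−1/3)θ₁(z+1/3) / [θ₁(z+2τ/3)θ₁(z−τ/3−1/3)θ₁(z−τ/3+1/3)] = ρ′ e^{2πiz} θ₁(3z;3τ)/θ₁(3z−τ;3τ).) -/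
open Complex

lemma summable_norm_jt (z : ℂ) {τ : ℂ} (hτ : 0 < τ.im) :
    Summable fun n : ℤ => ‖jacobiTheta₂_term n z τ‖ := by
  have h1 : Summable fun n : ℤ =>
      jacobiTheta₂_term n ((z.im : ℂ) * I) ((τ.im : ℂ) * I) :=
    (summable_jacobiTheta₂_term_iff _ _).2 (by simpa using hτ)
  rw [← Complex.summable_ofReal]
  refine h1.congr fun n => ?_
  rw [norm_jacobiTheta₂_term, jacobiTheta₂_term, Complex.ofReal_exp]
  congr 1
  push_cast
  linear_combination ((Real.pi : ℂ) * (n : ℂ) ^ 2 * τ.im + 2 * (Real.pi:ℂ) * n * z.im) * Complex.I_sq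

/-- The term of the triple product series. -/
noncomputable def trip (u τ : ℂ) (p : ℤ × ℤ × ℤ) : ℂ :=
  jacobiTheta₂_term p.1 u τ *
    (jacobiTheta₂_term p.2.1 (u - 1/3) τ * jacobiTheta₂_term p.2.2 (u + 1/3) τ)

lemma summable_norm_trip (u : ℂ) {τ : ℂ} (hτ : 0 < τ.im) :
    Summable fun p : ℤ × ℤ × ℤ => ‖trip u τ p‖ := by
  refine ((summable_norm_jt u hτ).mul_norm
    ((summable_norm_jt (u - 1/3) hτ).mul_norm (summable_norm_jt (u + 1/3) hτ))).congr
    fun p => ?_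
  rfl

lemma stepA (u : ℂ) {τ : ℂ} (hτ : 0 < τ.im) :
    jacobiTheta₂ u τ * jacobiTheta₂ (u - 1/3) τ * jacobiTheta₂ (u + 1/3) τ =
      ∑' p : ℤ × ℤ × ℤ, trip u τ p := by
  unfold jacobiTheta₂
  rw [mul_assoc,
    tsum_mul_tsum_of_summable_norm (summable_norm_jt (u - 1/3) hτ) (summable_norm_jt (u + 1/3) hτ),
    tsum_mul_tsum_of_summable_norm (summable_norm_jt u hτ)
      ((summable_norm_jt (u - 1/3) hτ).mul_norm (summable_norm_jt (u + 1/3) hτ))]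
  rfl

/-- Slice sums of the triple product series. -/
noncomputable def gS (u τ : ℂ) (S : ℤ) : ℂ :=
  ∑' bc : ℤ × ℤ, trip u τ (S - bc.1 - bc.2, bc.1, bc.2)

/-- reindexing `(a,b,c) ↦ (a+b+c, b, c)` -/
def eS : (ℤ × ℤ × ℤ) ≃ (ℤ × ℤ × ℤ) where
  toFun p := (p.1 + p.2.1 + p.2.2, p.2.1, p.2.2)
  invFun p := (p.1 - p.2.1 - p.2.2, p.2.1, p.2.2)
  left_inv p := by rcases p with ⟨a, b, c⟩; simp [Prod.ext_iff]; ring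
  right_inv p := by rcases p with ⟨a, b, c⟩; simp [Prod.ext_iff]; ring

lemma stepB (u : ℂ) {τ : ℂ} (hτ : 0 < τ.im) :
    ∑' p : ℤ × ℤ × ℤ, trip u τ p = ∑' S : ℤ, gS u τ S := by
  have hsum : Summable (fun p : ℤ × ℤ × ℤ => trip u τ (eS.symm p)) :=
    eS.symm.summable_iff.2 (summable_norm_trip u hτ).of_norm
  rw [← eS.symm.tsum_eq (trip u τ), Summable.tsum_prod' hsum fun S => hsum.prod_factor S]
  rfl

/-- cyclic reindexing of a slice -/
def psiS (S : ℤ) : (ℤ × ℤ) ≃ (ℤ × ℤ) where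
  toFun bc := (bc.2, S - bc.1 - bc.2)
  invFun bc := (S - bc.1 - bc.2, bc.1)
  left_inv bc := by simp [Prod.ext_iff] <;> omega
  right_inv bc := by simp [Prod.ext_iff] <;> omega

lemma stepC (u : ℂ) (τ : ℂ) {S : ℤ} (hS : ¬ (3:ℤ) ∣ S) : gS u τ S = 0 := by
  set e : ℂ := cexp (2 * (Real.pi:ℂ) * I * S / 3) with he
  have key : ∀ bc : ℤ × ℤ,
      trip u τ (S - (psiS S bc).1 - (psiS S bc).2, (psiS S bc).1, (psiS S bc).2) =
        e * trip u τ (S - bc.1 - bc.2, bc.1, bc.2) := by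
    rintro ⟨b, c⟩
    show trip u τ (S - c - (S - b - c), c, S - b - c) = _
    unfold trip jacobiTheta₂_term
    rw [← Complex.exp_add, ← Complex.exp_add, ← Complex.exp_add, ← Complex.exp_add,
      ← Complex.exp_add]
    refine Complex.exp_eq_exp_iff_exists_int.2 ⟨-c, ?_⟩
    push_cast
    ring
  have h1 : gS u τ S = e * gS u τ S := by
    unfold gS
    calc ∑' bc : ℤ × ℤ, trip u τ (S - bc.1 - bc.2, bc.1, bc.2)
        = ∑' bc : ℤ × ℤ, trip u τ (S - (psiS S bc).1 - (psiS S bc).2,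
            (psiS S bc).1, (psiS S bc).2) :=
          ((psiS S).tsum_eq fun bc => trip u τ (S - bc.1 - bc.2, bc.1, bc.2)).symm
      _ = ∑' bc : ℤ × ℤ, e * trip u τ (S - bc.1 - bc.2, bc.1, bc.2) := tsum_congr key
      _ = e * ∑' bc : ℤ × ℤ, trip u τ (S - bc.1 - bc.2, bc.1, bc.2) := tsum_mul_left
  have h2 : (1 - e) * gS u τ S = 0 := by linear_combination h1
  rcases mul_eq_zero.1 h2 with h | h
  · exfalso
    apply hS
    have he1 : e = 1 := by linear_combination -h
    obtain ⟨n, hn⟩ := Complex.exp_eq_one_iff.1 he1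
    have hne : (2 * (Real.pi:ℂ) * I) ≠ 0 :=
      mul_ne_zero (mul_ne_zero two_ne_zero (Complex.ofReal_ne_zero.2 Real.pi_ne_zero))
        Complex.I_ne_zero
    have h3 : (2*(Real.pi:ℂ)*I) * (S:ℂ) = (2*(Real.pi:ℂ)*I) * (3*n) := by
      linear_combination 3 * hn
    have h4 : (S : ℂ) = 3 * n := mul_left_cancel₀ hne h3
    exact ⟨n, by exact_mod_cast h4⟩
  · exact h

/-- The theta constant: `gS u τ 0` with `u = 0`. -/
noncomputable def cConst (τ : ℂ) : ℂ := gS 0 τ 0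

lemma gS_zero (u τ : ℂ) : gS u τ 0 = cConst τ := by
  refine tsum_congr fun bc => ?_
  rcases bc with ⟨b, c⟩
  unfold trip jacobiTheta₂_term
  rw [← Complex.exp_add, ← Complex.exp_add, ← Complex.exp_add, ← Complex.exp_add]
  congr 1
  push_cast
  ring

lemma stepD (u τ : ℂ) (k : ℤ) :
    gS u τ (3 * k) = jacobiTheta₂_term k (3 * u) (3 * τ) * cConst τ := by
  rw [← gS_zero u τ]
  unfold gS
  rw [← ((Equiv.addRight k).prodCongr (Equiv.addRight k)).tsum_eq
    (fun bc : ℤ × ℤ => trip u τ (3 * k - bc.1 - bc.2, bc.1, bc.2)), ← tsum_mul_left]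
  refine tsum_congr fun bc => ?_
  rcases bc with ⟨b, c⟩
  show trip u τ (3 * k - (b + k) - (c + k), b + k, c + k) = _
  unfold trip jacobiTheta₂_term
  dsimp only
  simp only [← Complex.exp_add]
  congr 1
  push_cast
  ring

lemma cubicJ {τ : ℂ} (hτ : 0 < τ.im) (u : ℂ) :
    jacobiTheta₂ u τ * jacobiTheta₂ (u - 1/3) τ * jacobiTheta₂ (u + 1/3) τ =
      cConst τ * jacobiTheta₂ (3 * u) (3 * τ) := by
  rw [stepA u hτ, stepB u hτ]
  have hinj : Function.Injective (fun k : ℤ => 3 * k) := fun a b h => by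
    simpa using h
  have hsupp : Function.support (gS u τ) ⊆ Set.range (fun k : ℤ => 3 * k) := by
    intro S hSne
    by_contra hS
    apply hSne
    refine stepC u τ fun ⟨k, hk⟩ => hS ⟨k, ?_⟩
    simpa using hk.symm
  rw [← hinj.tsum_eq hsupp]
  have : ∀ k : ℤ, gS u τ (3 * k) = jacobiTheta₂_term k (3 * u) (3 * τ) * cConst τ :=
    stepD u τ
  rw [tsum_congr this, tsum_mul_right]
  rw [mul_comm]
  rfl

lemma theta1_cubic {τ : ℂ} (hτ : 0 < τ.im) (z : ℂ) :
    theta1 z τ * theta1 (z - 1 / 3) τ * theta1 (z + 1 / 3) τ =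
      -cConst τ * theta1 (3 * z) (3 * τ) := by
  unfold theta1
  set u : ℂ := z + (1 + τ) / 2 with hu
  rw [show z - 1 / 3 + (1 + τ) / 2 = u - 1/3 by rw [hu]; ring,
    show z + 1 / 3 + (1 + τ) / 2 = u + 1/3 by rw [hu]; ring,
    show 3 * z + (1 + 3 * τ) / 2 = 3 * u - 1 by rw [hu]; ring]
  have hJ : jacobiTheta₂ (3 * u - 1) (3 * τ) = jacobiTheta₂ (3 * u) (3 * τ) := by
    have := jacobiTheta₂_add_left (3 * u - 1) (3 * τ)
    rw [show 3 * u - 1 + 1 = 3 * u by ring] at this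
    exact this.symm
  rw [hJ]
  have hC := cubicJ hτ u
  have hE : cexp (I * (Real.pi : ℂ) * τ / 4 + I * (Real.pi : ℂ) * z) *
      cexp (I * (Real.pi : ℂ) * τ / 4 + I * (Real.pi : ℂ) * (z - 1 / 3)) *
      cexp (I * (Real.pi : ℂ) * τ / 4 + I * (Real.pi : ℂ) * (z + 1 / 3)) =
      cexp (I * (Real.pi : ℂ) * (3 * τ) / 4 + I * (Real.pi : ℂ) * (3 * z)) := by
    rw [← Complex.exp_add, ← Complex.exp_add]
    congr 1
    ring
  linear_combination (-I^3 * cexp (I * (Real.pi : ℂ) * τ / 4 + I * (Real.pi : ℂ) * z) *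
      cexp (I * (Real.pi : ℂ) * τ / 4 + I * (Real.pi : ℂ) * (z - 1 / 3)) *
      cexp (I * (Real.pi : ℂ) * τ / 4 + I * (Real.pi : ℂ) * (z + 1 / 3))) * hC +
    (-I^3 * cConst τ * jacobiTheta₂ (3 * u) (3 * τ)) * hE +
    (-I * cConst τ * cexp (I * (Real.pi : ℂ) * (3 * τ) / 4 + I * (Real.pi : ℂ) * (3 * z)) *
      jacobiTheta₂ (3 * u) (3 * τ)) * Complex.I_sq

lemma theta1_add_tau (x τ : ℂ) :
    theta1 (x + τ) τ =
      -cexp (-(Real.pi : ℂ) * I * τ - 2 * (Real.pi : ℂ) * I * x) * theta1 x τ := by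
  unfold theta1
  rw [show x + τ + (1 + τ) / 2 = x + (1 + τ) / 2 + τ by ring,
    jacobiTheta₂_add_left' (x + (1 + τ) / 2) τ]
  have hE : cexp (I * (Real.pi : ℂ) * τ / 4 + I * (Real.pi : ℂ) * (x + τ)) *
      cexp (-(Real.pi : ℂ) * I * (τ + 2 * (x + (1 + τ) / 2))) =
      -(cexp (-(Real.pi : ℂ) * I * τ - 2 * (Real.pi : ℂ) * I * x) *
        cexp (I * (Real.pi : ℂ) * τ / 4 + I * (Real.pi : ℂ) * x)) := by
    rw [← Complex.exp_add,
      show I * (Real.pi : ℂ) * τ / 4 + I * (Real.pi : ℂ) * (x + τ) +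
        -(Real.pi : ℂ) * I * (τ + 2 * (x + (1 + τ) / 2)) =
        (-(Real.pi : ℂ) * I * τ - 2 * (Real.pi : ℂ) * I * x +
          (I * (Real.pi : ℂ) * τ / 4 + I * (Real.pi : ℂ) * x)) - (Real.pi : ℂ) * I by ring,
      Complex.exp_sub, Complex.exp_pi_mul_I, ← Complex.exp_add]
    ring
  linear_combination (-I * jacobiTheta₂ (x + (1 + τ) / 2) τ) * hE

/-- Cross-multiplied equivalence of the two expressions for the squared Gauss map:
θ₁(z)θ₁(z−1/3)θ₁(z+1/3)·θ₁(3z−τ;3τ)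
  = −e^{iπτ/3} e^{2πiz} θ₁(z+2τ/3)θ₁(z−τ/3−1/3)θ₁(z−τ/3+1/3)·θ₁(3z;3τ). -/
theorem gauss_map_sq_two_forms (τ : ℂ) (hτ : 0 < τ.im) (z : ℂ) :
    theta1 z τ * theta1 (z - 1 / 3) τ * theta1 (z + 1 / 3) τ *
        theta1 (3 * z - τ) (3 * τ) =
      -Complex.exp (I * (Real.pi : ℂ) * τ / 3) *
        Complex.exp (2 * (Real.pi : ℂ) * I * z) *
        theta1 (z + 2 * τ / 3) τ * theta1 (z - τ / 3 - 1 / 3) τ *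
        theta1 (z - τ / 3 + 1 / 3) τ * theta1 (3 * z) (3 * τ) := by
  have h1 := theta1_cubic hτ z
  have h2 := theta1_cubic hτ (z - τ / 3)
  rw [show 3 * (z - τ / 3) = 3 * z - τ by ring] at h2
  have h3 := theta1_add_tau (z - τ / 3) τ
  rw [show z - τ / 3 + τ = z + 2 * τ / 3 by ring] at h3
  have hE : cexp (I * (Real.pi : ℂ) * τ / 3) * cexp (2 * (Real.pi : ℂ) * I * z) *
      cexp (-(Real.pi : ℂ) * I * τ - 2 * (Real.pi : ℂ) * I * (z - τ / 3)) = 1 := by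
    rw [← Complex.exp_add, ← Complex.exp_add,
      show I * (Real.pi : ℂ) * τ / 3 + 2 * (Real.pi : ℂ) * I * z +
        (-(Real.pi : ℂ) * I * τ - 2 * (Real.pi : ℂ) * I * (z - τ / 3)) = 0 by ring,
      Complex.exp_zero]
  linear_combination (theta1 (3 * z - τ) (3 * τ)) * h1 +
    (cexp (I * (Real.pi : ℂ) * τ / 3) * cexp (2 * (Real.pi : ℂ) * I * z) *
      theta1 (z - τ / 3 - 1 / 3) τ * theta1 (z - τ / 3 + 1 / 3) τ *
      theta1 (3 * z) (3 * τ)) * h3 -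
    (theta1 (3 * z) (3 * τ)) * h2 -
    (theta1 (z - τ / 3) τ * theta1 (z - τ / 3 - 1 / 3) τ * theta1 (z - τ / 3 + 1 / 3) τ *
      theta1 (3 * z) (3 * τ)) * hE
end

section
/- Elementary geometry on the circular arc |τ − 1/3| = 1/3 (used in the existence proof to show θ_v > θ_h there): for every τ ∈ ℂ with Im τ > 0 and |τ − 1/3| = 1/3, one has arg(τ − 1) − π/2 > arg τ, i.e. θ_v(τ) > arg τ. -/
open Complex

/-!
The angle at `τ` subtended by the segment `[0, 1]` is `arg (τ - 1) - arg τ = arg ((τ - 1) / τ)`,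
and it is obtuse exactly when `τ` lies inside the Thales circle `|τ - 1/2| = 1/2`, i.e. when
`|τ|² < Re τ`. The arc `|τ - 1/3| = 1/3` satisfies `|τ|² = 2/3 Re τ`, so it lies inside.
-/

namespace Complex

open Real

theorem pi_div_two_lt_arg_iff {z : ℂ} : π / 2 < arg z ↔ z.re < 0 ∧ 0 ≤ z.im := by
  rw [← not_le, arg_le_pi_div_two_iff, not_or, not_le, not_lt]

theorem arg_div_of_im_nonneg_of_im_pos {z w : ℂ} (hz₀ : z ≠ 0) (hz : 0 ≤ z.im) (hw : 0 < w.im) :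
    arg (z / w) = arg z - arg w := by
  have hw₀ : w ≠ 0 := fun h ↦ by simp [h] at hw
  rw [← arg_coe_angle_toReal_eq_arg, arg_div_coe_angle hz₀ hw₀, ← Real.Angle.coe_sub,
    Real.Angle.toReal_coe_eq_self_iff_mem_Ioc]
  have hz_nonneg := arg_nonneg_iff.mpr hz
  have hw_nonneg := arg_nonneg_iff.mpr hw.le
  have hw_lt_pi := arg_lt_pi_iff.mpr (Or.inr hw.ne')
  have hz_le_pi := arg_le_pi z
  constructor <;> linarith

theorem pi_div_two_lt_arg_sub_one_sub_arg_iff {τ : ℂ} (hτ : 0 < τ.im) :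
    π / 2 < arg (τ - 1) - arg τ ↔ normSq τ < τ.re := by
  have hτ₁ : 0 < (τ - 1).im := by simpa using hτ
  have hnormSq : 0 < normSq τ := normSq_pos.mpr fun h ↦ by simp [h] at hτ
  rw [← arg_div_of_im_nonneg_of_im_pos (fun h ↦ by simp [h] at hτ₁) hτ₁.le hτ,
    pi_div_two_lt_arg_iff, div_re, div_im]
  have hre : (τ - 1).re * τ.re / normSq τ + (τ - 1).im * τ.im / normSq τ
      = (normSq τ - τ.re) / normSq τ := by
    simp only [sub_re, sub_im, one_re, one_im, normSq_apply]
    ring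
  have him : (τ - 1).im * τ.re / normSq τ - (τ - 1).re * τ.im / normSq τ = τ.im / normSq τ := by
    simp only [sub_re, sub_im, one_re, one_im]
    ring
  rw [hre, him, div_lt_iff₀ hnormSq, zero_mul, sub_neg,
    and_iff_left (div_nonneg hτ.le hnormSq.le)]

end Complex

/-- Elementary geometry on the circular arc |τ − 1/3| = 1/3:
for τ in the upper half-plane on this arc, θ_v(τ) = arg(τ − 1) − π/2 > arg τ. -/
theorem theta_v_gt_arg_on_arc (τ : ℂ) (hτ : 0 < τ.im)
    (harc : ‖τ - 1 / 3‖ = 1 / 3) :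
    Complex.arg (τ - 1) - Real.pi / 2 > Complex.arg τ := by
  have hcircle : normSq τ = 2 / 3 * τ.re := by
    have h := congrArg (· ^ 2) harc
    simp only [← normSq_eq_norm_sq, normSq_apply, sub_re, sub_im] at h
    norm_num at h
    rw [normSq_apply]
    linarith
  have hnormSq : 0 < normSq τ := normSq_pos.mpr fun h ↦ by simp [h] at hτ
  have := (pi_div_two_lt_arg_sub_one_sub_arg_iff hτ).mpr (by linarith)
  linarith
end
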